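/- arXiv:2605.20707 — 3 statements merged into one kernel-verified Lean document; each statement's English description precedes it below -/
import Mathlib

section
/- The set {n^{1/3} : n a cube-free positive integer} is linearly independent over ℚ. -/
/-!
Kummer theory over `K = ℚ(ζ_p)`, `p` prime. If `a ≠ 0` has `a ^ p ∈ K`, then `σ ↦ σ a / a` is a
character of `Gal(L/K)` (with `L` the algebraic closure of `K` in `ℂ`), since its values are `p`-th
roots of unity and hence lie in `K`. The real `p`-th roots of distinct `p`-free integers give
distinct characters: equal characters force `a_i / a_j ∈ K`, so `n_i / n_j` is a `p`-th power in
`K`; as `[K : ℚ] = p - 1 < p`, it is then a `p`-th power in `ℚ`, which `p`-freeness rules out.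
Dedekind's independence of characters now gives linear independence over `K`, hence over `ℚ`.
-/

open Polynomial IntermediateField Module

def IsPowerFree (k n : ℕ) : Prop := ∀ p : ℕ, p.Prime → ¬ p ^ k ∣ n

namespace IsPowerFree

variable {k n : ℕ}

lemma ne_zero (h : IsPowerFree k n) : n ≠ 0 := by
  rintro rfl
  exact h 2 Nat.prime_two (dvd_zero _)

lemma eq_one_of_pow_dvd_mul_pow (h : IsPowerFree k n) {u v : ℕ} (huv : u.Coprime v)
    (hdvd : u ^ k ∣ n * v ^ k) : u = 1 := by
  by_contra hu
  obtain ⟨p, hp, hpu⟩ := Nat.exists_prime_and_dvd hu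
  have hpv : (p ^ k).Coprime (v ^ k) := ((Nat.Coprime.coprime_dvd_left hpu huv).pow k k)
  exact h p hp (hpv.dvd_of_dvd_mul_right ((pow_dvd_pow_of_dvd hpu k).trans hdvd))

lemma eq_of_pow_mul_eq {m : ℕ} (hn : IsPowerFree k n) (hm : IsPowerFree k m) {r : ℚ}
    (hr : r ^ k * m = n) : n = m := by
  have hZ : r.num ^ k * m = n * (r.den : ℤ) ^ k := by
    have hden : (r.den : ℚ) ≠ 0 := by exact_mod_cast r.den_nz
    rw [← Rat.num_div_den r, div_pow, div_mul_eq_mul_div, div_eq_iff (pow_ne_zero k hden)] at hr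
    exact_mod_cast hr
  have hN : r.num.natAbs ^ k * m = n * r.den ^ k := by
    simpa [Int.natAbs_mul, Int.natAbs_pow] using congrArg Int.natAbs hZ
  have hnum : r.num.natAbs = 1 :=
    hn.eq_one_of_pow_dvd_mul_pow r.reduced (hN ▸ dvd_mul_right _ _)
  have hden : r.den = 1 :=
    hm.eq_one_of_pow_dvd_mul_pow r.reduced.symm (by rw [mul_comm, hN]; exact dvd_mul_left _ _)
  simpa [hnum, hden] using hN.symm

end IsPowerFree

theorem exists_pow_eq_of_pow_eq_algebraMap {F E : Type*} [Field F] [Field E] [Algebra F E]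
    [FiniteDimensional F E] {p : ℕ} (hp : p.Prime) (hdeg : finrank F E < p) {y : E} {c : F}
    (hy : y ^ p = algebraMap F E c) : ∃ r : F, r ^ p = c := by
  by_contra! hc
  have hmin : minpoly F y = X ^ p - C c :=
    (minpoly.eq_of_irreducible_of_monic (X_pow_sub_C_irreducible_of_prime hp hc)
      (by simp [hy]) (monic_X_pow_sub_C c hp.ne_zero)).symm
  have := minpoly.natDegree_le (A := F) y
  rw [hmin, natDegree_X_pow_sub_C] at this
  omega

section Kummer

variable {K L : Type*} [Field K] [Field L] [Algebra K L] {n : ℕ}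

lemma div_mem_bot_of_pow_mem_bot (hμ : ∀ ζ : L, ζ ^ n = 1 → ζ ∈ (⊥ : IntermediateField K L))
    {a : L} (ha : a ≠ 0) (han : a ^ n ∈ (⊥ : IntermediateField K L)) (σ : Gal(L/K)) :
    σ a / a ∈ (⊥ : IntermediateField K L) := by
  refine hμ _ ?_
  obtain ⟨c, hc⟩ := mem_bot.mp han
  rw [div_pow, ← map_pow, ← hc, AlgEquiv.commutes, div_self (by rw [hc]; exact pow_ne_zero n ha)]

lemma map_eq_self_of_mem_bot {x : L} (hx : x ∈ (⊥ : IntermediateField K L)) (σ : Gal(L/K)) :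
    σ x = x := by
  obtain ⟨c, rfl⟩ := mem_bot.mp hx
  exact σ.commutes c

def kummerChar (hμ : ∀ ζ : L, ζ ^ n = 1 → ζ ∈ (⊥ : IntermediateField K L))
    {a : L} (ha : a ≠ 0) (han : a ^ n ∈ (⊥ : IntermediateField K L)) : Gal(L/K) →* L where
  toFun σ := σ a / a
  map_one' := div_self ha
  map_mul' σ τ := by
    have hτ : τ a = τ a / a * a := (div_mul_cancel₀ _ ha).symm
    have hfix := map_eq_self_of_mem_bot (div_mem_bot_of_pow_mem_bot hμ ha han τ) σ
    simp only [AlgEquiv.mul_apply]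
    rw [hτ, map_mul, hfix]
    field_simp

lemma kummerChar_apply (hμ : ∀ ζ : L, ζ ^ n = 1 → ζ ∈ (⊥ : IntermediateField K L))
    {a : L} (ha : a ≠ 0) (han : a ^ n ∈ (⊥ : IntermediateField K L)) (σ : Gal(L/K)) :
    kummerChar hμ ha han σ = σ a / a := rfl

lemma div_mem_bot_of_kummerChar_eq [IsGalois K L]
    (hμ : ∀ ζ : L, ζ ^ n = 1 → ζ ∈ (⊥ : IntermediateField K L))
    {a b : L} (ha : a ≠ 0) (han : a ^ n ∈ (⊥ : IntermediateField K L))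
    (hb : b ≠ 0) (hbn : b ^ n ∈ (⊥ : IntermediateField K L))
    (h : kummerChar hμ ha han = kummerChar hμ hb hbn) : a / b ∈ (⊥ : IntermediateField K L) := by
  refine (InfiniteGalois.mem_bot_iff_fixed _).mpr fun σ => ?_
  have hσ := DFunLike.congr_fun h σ
  rw [kummerChar_apply, kummerChar_apply, div_eq_div_iff ha hb] at hσ
  rw [map_div₀, div_eq_div_iff ((map_ne_zero σ).mpr hb) hb]
  linear_combination hσ

theorem linearIndependent_of_pow_mem_bot [IsGalois K L]
    (hμ : ∀ ζ : L, ζ ^ n = 1 → ζ ∈ (⊥ : IntermediateField K L)) {ι : Type*} {a : ι → L}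
    (ha : ∀ i, a i ≠ 0) (han : ∀ i, a i ^ n ∈ (⊥ : IntermediateField K L))
    (hdiv : ∀ i j, a i / a j ∈ (⊥ : IntermediateField K L) → i = j) :
    LinearIndependent K a := by
  set χ : ι → Gal(L/K) →* L := fun i => kummerChar hμ (ha i) (han i)
  have hχ : LinearIndependent L (fun i => ⇑(χ i)) :=
    (linearIndependent_monoidHom Gal(L/K) L).comp χ fun i j hij =>
      hdiv i j (div_mem_bot_of_kummerChar_eq hμ _ _ _ _ hij)
  rw [linearIndependent_iff'] at hχ ⊢
  intro s g hg i hi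
  -- Dedekind's lemma, applied to the coefficients `g j * a j` of the characters.
  have hσ : ∑ j ∈ s, (algebraMap K L (g j) * a j) • ⇑(χ j) = 0 := by
    funext σ
    simp only [Finset.sum_apply, Pi.smul_apply, smul_eq_mul, χ, kummerChar_apply, Pi.zero_apply]
    calc ∑ j ∈ s, algebraMap K L (g j) * a j * (σ (a j) / a j)
        = ∑ j ∈ s, algebraMap K L (g j) * σ (a j) :=
          Finset.sum_congr rfl fun j _ => by field_simp [ha j]
      _ = σ (∑ j ∈ s, g j • a j) := by simp [Algebra.smul_def]
      _ = 0 := by rw [hg, map_zero]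
  simpa [ha i] using hχ s _ hσ i hi

end Kummer

noncomputable def cyclotomicSubfield (p : ℕ) : IntermediateField ℚ ℂ :=
  ℚ⟮Complex.exp (2 * Real.pi * Complex.I / p)⟯

lemma finrank_cyclotomicSubfield {p : ℕ} (hp : 0 < p) :
    finrank ℚ (cyclotomicSubfield p) = p.totient := by
  have hζ := Complex.isPrimitiveRoot_exp p hp.ne'
  rw [cyclotomicSubfield, adjoin.finrank (hζ.isIntegral hp).tower_top,
    ← cyclotomic_eq_minpoly_rat hζ hp, natDegree_cyclotomic]

lemma mem_bot_of_pow_eq_one {p : ℕ} (hp : 0 < p) {L : IntermediateField (cyclotomicSubfield p) ℂ}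
    {x : L} (hx : x ^ p = 1) : x ∈ (⊥ : IntermediateField (cyclotomicSubfield p) L) := by
  have hζ := Complex.isPrimitiveRoot_exp p hp.ne'
  have : NeZero p := ⟨hp.ne'⟩
  obtain ⟨i, -, hi⟩ := hζ.eq_pow_of_pow_eq_one (congrArg Subtype.val hx : (x : ℂ) ^ p = 1)
  refine mem_bot.mpr ⟨⟨_, mem_adjoin_simple_self ℚ _⟩ ^ i, Subtype.ext ?_⟩
  simpa using hi

lemma rpow_inv_natCast_pow_natCast (n : ℕ) {p : ℕ} (hp : p ≠ 0) :
    (((n : ℝ) ^ (p⁻¹ : ℝ) : ℝ) : ℂ) ^ p = n := by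
  rw [← Complex.ofReal_pow, Real.rpow_inv_natCast_pow n.cast_nonneg hp, Complex.ofReal_natCast]

theorem linearIndepOn_rpow_inv_of_prime {p : ℕ} (hp : p.Prime) :
    LinearIndepOn ℚ (fun n : ℕ => (n : ℝ) ^ (p⁻¹ : ℝ)) {n | IsPowerFree p n} := by
  set K := cyclotomicSubfield p
  set L := algebraicClosure K ℂ
  have hζ := Complex.isPrimitiveRoot_exp p hp.ne_zero
  have : FiniteDimensional ℚ K := adjoin.finiteDimensional (hζ.isIntegral hp.pos).tower_top
  have hmem (i : {n | IsPowerFree p n}) : ((((i : ℕ) : ℝ) ^ (p⁻¹ : ℝ) : ℝ) : ℂ) ∈ L :=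
    mem_algebraicClosure_iff.mpr <| IsAlgebraic.of_pow hp.pos <|
      (rpow_inv_natCast_pow_natCast i hp.ne_zero) ▸ isAlgebraic_natCast _
  set a : {n | IsPowerFree p n} → L := fun i => ⟨_, hmem i⟩
  have ha_pow (i) : a i ^ p = ((i : ℕ) : L) :=
    Subtype.ext (by simpa using rpow_inv_natCast_pow_natCast i hp.ne_zero)
  have ha (i) : a i ≠ 0 := fun h => i.2.ne_zero <| by
    have : ((i : ℕ) : L) = 0 := by rw [← ha_pow, h, zero_pow hp.ne_zero]
    exact_mod_cast this
  have hdiv (i j) (hij : a i / a j ∈ (⊥ : IntermediateField K L)) : i = j := by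
    obtain ⟨y, hy⟩ := mem_bot.mp hij
    have hyp : y ^ p = algebraMap ℚ K ((i : ℕ) / (j : ℕ)) := by
      apply (algebraMap K L).injective
      simp [hy, div_pow, ha_pow]
    obtain ⟨r, hr⟩ := exists_pow_eq_of_pow_eq_algebraMap hp
      ((finrank_cyclotomicSubfield hp.pos).symm ▸ Nat.totient_lt p hp.one_lt) hyp
    have hj : ((j : ℕ) : ℚ) ≠ 0 := by exact_mod_cast j.2.ne_zero
    exact Subtype.ext (i.2.eq_of_pow_mul_eq j.2 (by rw [hr, div_mul_cancel₀ _ hj]))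
  have hK : LinearIndependent K a :=
    linearIndependent_of_pow_mem_bot (fun x => mem_bot_of_pow_eq_one hp.pos) ha
      (fun i => ha_pow i ▸ IntermediateField.natCast_mem _ _) hdiv
  have hC : LinearIndependent ℚ
      (fun i : {n | IsPowerFree p n} => ((((i : ℕ) : ℝ) ^ (p⁻¹ : ℝ) : ℝ) : ℂ)) :=
    (hK.map' L.val.toLinearMap (LinearMap.ker_eq_bot.mpr L.val.injective)).restrict_scalars' ℚ
  exact hC.of_comp (Complex.ofRealAm.toLinearMap.restrictScalars ℚ)

/-- The set `{n^{1/3} : n cube-free positive integer}` is linearly independent over `ℚ`. -/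
theorem stmt3 (s : Finset ℕ) (q : ℕ → ℚ)
    (hs : ∀ n ∈ s, 0 < n ∧ ∀ p : ℕ, p.Prime → ¬ p ^ 3 ∣ n)
    (h : ∑ n ∈ s, (q n : ℝ) * (n : ℝ) ^ ((1 : ℝ) / 3) = 0) :
    ∀ n ∈ s, q n = 0 := by
  have hli : LinearIndepOn ℚ (fun n : ℕ => (n : ℝ) ^ ((3 : ℕ)⁻¹ : ℝ)) s :=
    (linearIndepOn_rpow_inv_of_prime Nat.prime_three).mono fun n hn => (hs n hn).2
  refine linearIndepOn_finset_iff.mp hli q ?_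
  simpa [Rat.smul_def, one_div] using h
end

section
/- Let m ≥ 1 and let n_1, …, n_m ≤ M be positive integers, and ε_j ∈ {±1} such that S = Σ_{j=1}^m ε_j n_j^{1/3} ≠ 0. Then |S| ≥ 1 / (m M^{1/3})^{3^{m−1} − 1}. -/
/-!
Let `ω` be a primitive `d`-th root of unity and `α j ^ d = n j ∈ ℤ`. An embedding of
`ℚ(ω, α)` into `ℂ` sends `ω` to `ω ^ u` with `u` a unit mod `d` and each `α j` to
`ω ^ t j * α j`, so it permutes the twisted sums `T c = ∑ j, e j * ω ^ c j * α j`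
(`c : Fin m → ZMod d`) along the affine bijection `c ↦ u • c + t`. The product of the nonzero
`T c` is therefore an algebraic integer fixed by every embedding, i.e. a nonzero rational
integer, and has absolute value at least `1`. The `d` constant vectors `c ≡ a` give
`T c = ω ^ a * S`; every other factor has absolute value at most `B = ∑ j, |e j * α j| ≥ 1`.
Hence `1 ≤ |S| ^ d * B ^ (d ^ m - d)`.
-/

open Finset

section PowVal

variable {M : Type*} [Monoid M] {d : ℕ} {ω : M}

theorem pow_val_add_of_pow_eq_one [NeZero d] (hω : ω ^ d = 1) (a b : ZMod d) :
    ω ^ (a + b).val = ω ^ a.val * ω ^ b.val := by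
  rw [ZMod.val_add, ← pow_eq_pow_mod _ hω, pow_add]

theorem pow_val_pow_val_of_pow_eq_one (hω : ω ^ d = 1) (a b : ZMod d) :
    (ω ^ a.val) ^ b.val = ω ^ (a * b).val := by
  rw [ZMod.val_mul, ← pow_eq_pow_mod _ hω, pow_mul]

end PowVal

namespace IsPrimitiveRoot

variable {L : Type*} [Field L] {d : ℕ} [NeZero d] {ω : L}

theorem exists_isUnit_pow_val_eq (hω : IsPrimitiveRoot ω d) {ω' : L}
    (hω' : IsPrimitiveRoot ω' d) : ∃ u : ZMod d, IsUnit u ∧ ω ^ u.val = ω' := by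
  obtain ⟨i, hid, rfl⟩ := hω.eq_pow_of_pow_eq_one hω'.pow_eq_one
  refine ⟨i, ?_, by rw [ZMod.val_cast_of_lt hid]⟩
  exact (ZMod.isUnit_iff_coprime i d).mpr ((hω.pow_iff_coprime (NeZero.pos d) i).mp hω')

theorem exists_pow_val_mul_eq_of_pow_eq_pow (hω : IsPrimitiveRoot ω d) {x y : L}
    (hxy : x ^ d = y ^ d) : ∃ t : ZMod d, ω ^ t.val * y = x := by
  rcases eq_or_ne y 0 with rfl | hy
  · refine ⟨0, ?_⟩
    rw [zero_pow (NeZero.ne d)] at hxy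
    rw [mul_zero, pow_eq_zero_iff (NeZero.ne d) |>.mp hxy]
  · have hroot : (x / y) ^ d = 1 := by rw [div_pow, hxy, div_self (pow_ne_zero d hy)]
    obtain ⟨i, hid, hi⟩ := hω.eq_pow_of_pow_eq_one hroot
    exact ⟨i, by rw [ZMod.val_cast_of_lt hid, hi, div_mul_cancel₀ x hy]⟩

end IsPrimitiveRoot

section TwistedSum

variable {d m : ℕ}

def twistedSum {R : Type*} [CommRing R] (e : Fin m → ℤ) (ω : R) (α : Fin m → R)
    (c : Fin m → ZMod d) : R :=
  ∑ j, e j * ω ^ (c j).val * α j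

theorem map_twistedSum {R S : Type*} [CommRing R] [CommRing S] (f : R →+* S) (e : Fin m → ℤ)
    (ω : R) (α : Fin m → R) (c : Fin m → ZMod d) :
    f (twistedSum e ω α c) = twistedSum e (f ω) (f ∘ α) c := by
  simp [twistedSum]

theorem twistedSum_const {R : Type*} [CommRing R] (e : Fin m → ℤ) (ω : R) (α : Fin m → R)
    (a : ZMod d) : twistedSum e ω α (Function.const _ a) = ω ^ a.val * ∑ j, e j * α j := by
  rw [twistedSum, mul_sum]
  exact sum_congr rfl fun j _ ↦ by rw [Function.const_apply]; ring

theorem twistedSum_pow_val_smul_add {R : Type*} [CommRing R] [NeZero d] (e : Fin m → ℤ) {ω : R}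
    (hω : ω ^ d = 1) (α : Fin m → R) (u : ZMod d) (t c : Fin m → ZMod d) :
    twistedSum e (ω ^ u.val) (fun j ↦ ω ^ (t j).val * α j) c =
      twistedSum e ω α (u • c + t) := by
  refine sum_congr rfl fun j _ ↦ ?_
  rw [Pi.add_apply, Pi.smul_apply, smul_eq_mul, pow_val_add_of_pow_eq_one hω,
    ← pow_val_pow_val_of_pow_eq_one hω]
  ring

theorem exists_perm_twistedSum_eq {L : Type*} [Field L] [NeZero d] (e : Fin m → ℤ) {ω ω' : L}
    (hω : IsPrimitiveRoot ω d) (hω' : IsPrimitiveRoot ω' d) {α α' : Fin m → L}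
    (hα : ∀ j, α' j ^ d = α j ^ d) :
    ∃ g : Equiv.Perm (Fin m → ZMod d), ∀ c, twistedSum e ω' α' c = twistedSum e ω α (g c) := by
  obtain ⟨u, hu, rfl⟩ := hω.exists_isUnit_pow_val_eq hω'
  choose t ht using fun j ↦ hω.exists_pow_val_mul_eq_of_pow_eq_pow (hα j)
  refine ⟨(MulAction.toPerm hu.unit).trans (Equiv.addRight t), fun c ↦ ?_⟩
  rw [show α' = fun j ↦ ω ^ (t j).val * α j from funext fun j ↦ (ht j).symm,
    twistedSum_pow_val_smul_add e hω.pow_eq_one]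
  rfl

open scoped Classical in
noncomputable def twistedProd (d : ℕ) [NeZero d] {R : Type*} [CommRing R] (e : Fin m → ℤ)
    (ω : R) (α : Fin m → R) : R :=
  ∏ c : Fin m → ZMod d, if twistedSum e ω α c = 0 then 1 else twistedSum e ω α c

theorem map_twistedProd [NeZero d] {K L : Type*} [Field K] [Field L] (f : K →+* L)
    (e : Fin m → ℤ) (ω : K) (α : Fin m → K) :
    f (twistedProd d e ω α) = twistedProd d e (f ω) (f ∘ α) := by
  rw [twistedProd, twistedProd, map_prod]
  refine prod_congr rfl fun c _ ↦ ?_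
  rw [← map_twistedSum]
  split_ifs <;> simp_all

theorem twistedProd_eq_of_pow_eq_pow {L : Type*} [Field L] [NeZero d] (e : Fin m → ℤ)
    {ω ω' : L} (hω : IsPrimitiveRoot ω d) (hω' : IsPrimitiveRoot ω' d) {α α' : Fin m → L}
    (hα : ∀ j, α' j ^ d = α j ^ d) : twistedProd d e ω' α' = twistedProd d e ω α := by
  obtain ⟨g, hg⟩ := exists_perm_twistedSum_eq e hω hω' hα
  classical
  simp only [twistedProd, hg]
  exact Equiv.prod_comp g fun c ↦ if twistedSum e ω α c = 0 then 1 else twistedSum e ω α c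

end TwistedSum

theorem exists_intCast_eq_of_forall_algHom_eq {K L : Type*} [Field K] [Algebra ℚ K]
    [Algebra.IsAlgebraic ℚ K] [Field L] [Algebra ℚ L] [IsAlgClosed L] {x : K}
    (hx : IsIntegral ℤ x) (hfix : ∀ φ ψ : K →ₐ[ℚ] L, φ x = ψ x) : ∃ z : ℤ, x = z := by
  have hxℚ : IsIntegral ℚ x := hx.tower_top
  have hroots : Fintype.card ((minpoly ℚ x).rootSet L) ≤ 1 := by
    rw [Fintype.card_le_one_iff_subsingleton, Set.subsingleton_coe,
      ← Algebra.IsAlgebraic.range_eval_eq_rootSet_minpoly]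
    rintro _ ⟨φ, rfl⟩ _ ⟨ψ, rfl⟩
    exact hfix φ ψ
  rw [Polynomial.card_rootSet_eq_natDegree (minpoly.irreducible hxℚ).separable
    (IsAlgClosed.splits _)] at hroots
  obtain ⟨q, rfl⟩ := minpoly.natDegree_eq_one_iff.mp
    (hroots.antisymm (minpoly.natDegree_pos hxℚ))
  obtain ⟨z, rfl⟩ := IsIntegrallyClosed.isIntegral_iff.mp
    ((isIntegral_algebraMap_iff (algebraMap ℚ K).injective).mp hx)
  exact ⟨z, by simp⟩

theorem isIntegral_of_pow_eq_intCast {R : Type*} [CommRing R] {d : ℕ} [NeZero d] {x : R}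
    {n : ℤ} (h : x ^ d = n) : IsIntegral ℤ x :=
  .of_pow (NeZero.pos d) (h ▸ isIntegral_intCast n)

section TwistedProd

variable {d m : ℕ} [NeZero d]

theorem isIntegral_twistedProd {R : Type*} [CommRing R] (e : Fin m → ℤ) {ω : R}
    (hω : IsIntegral ℤ ω) {α : Fin m → R} (hα : ∀ j, IsIntegral ℤ (α j)) :
    IsIntegral ℤ (twistedProd d e ω α) := by
  refine IsIntegral.prod _ fun c _ ↦ ?_
  split_ifs
  · exact isIntegral_one
  · exact IsIntegral.sum _ fun j _ ↦ ((isIntegral_intCast _).mul (hω.pow _)).mul (hα j)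

theorem twistedProd_ne_zero {K : Type*} [Field K] (e : Fin m → ℤ) (ω : K) (α : Fin m → K) :
    twistedProd d e ω α ≠ 0 :=
  prod_ne_zero_iff.mpr fun c _ ↦ by split_ifs with h; exacts [one_ne_zero, h]

theorem one_le_norm_twistedProd (e : Fin m → ℤ) {ω : ℂ} (hω : IsPrimitiveRoot ω d)
    {α : Fin m → ℂ} {n : Fin m → ℤ} (hα : ∀ j, α j ^ d = n j) :
    1 ≤ ‖twistedProd d e ω α‖ := by
  let K := IntermediateField.adjoin ℚ (insert ω (Set.range α))
  let ωK : K := ⟨ω, IntermediateField.subset_adjoin _ _ (Set.mem_insert _ _)⟩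
  let αK (j : Fin m) : K :=
    ⟨α j, IntermediateField.subset_adjoin _ _ (Set.mem_insert_of_mem _ ⟨j, rfl⟩)⟩
  have hωK : IsPrimitiveRoot ωK d := hω.of_map_of_injective K.val.injective
  have hαK (j : Fin m) : αK j ^ d = n j := K.val.injective (by simp [αK, hα])
  have : Algebra.IsAlgebraic ℚ K := IntermediateField.isAlgebraic_adjoin <| by
    rintro _ (rfl | ⟨j, rfl⟩)
    exacts [(hω.isIntegral (NeZero.pos d)).tower_top,
      (isIntegral_of_pow_eq_intCast (hα j)).tower_top]
  obtain ⟨z, hz⟩ := exists_intCast_eq_of_forall_algHom_eq (L := ℂ)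
    (isIntegral_twistedProd (d := d) e (hωK.isIntegral (NeZero.pos d))
      fun j ↦ isIntegral_of_pow_eq_intCast (hαK j))
    fun φ ψ ↦ by
      rw [← AlgHom.coe_toRingHom, map_twistedProd, ← AlgHom.coe_toRingHom ψ, map_twistedProd]
      exact twistedProd_eq_of_pow_eq_pow e (hωK.map_of_injective ψ.injective)
        (hωK.map_of_injective φ.injective) fun j ↦ by simp [← map_pow, hαK]
  have hQ : twistedProd d e ω α = z := by
    rw [← map_intCast K.val, ← hz]
    exact (map_twistedProd K.val.toRingHom e ωK αK).symm
  have hz0 : z ≠ 0 := by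
    rintro rfl
    exact twistedProd_ne_zero e ωK αK (by simpa using hz)
  rw [hQ, Complex.norm_intCast]
  exact_mod_cast Int.one_le_abs hz0

end TwistedProd

section Estimates

variable {d m : ℕ} [NeZero d]

theorem one_le_norm_of_pow_eq_intCast {x : ℂ} {n : ℤ} (h : x ^ d = n) (hx : x ≠ 0) :
    1 ≤ ‖x‖ := by
  have hn : n ≠ 0 := by
    rintro rfl
    exact hx (pow_eq_zero_iff (NeZero.ne d) |>.mp (by simpa using h))
  have : 1 ≤ ‖x‖ ^ d := by
    rw [← norm_pow, h, Complex.norm_intCast]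
    exact_mod_cast Int.one_le_abs hn
  exact (one_le_pow_iff_of_nonneg (norm_nonneg x) (NeZero.ne d)).mp this

theorem one_le_sum_norm_mul (e : Fin m → ℤ) {α : Fin m → ℂ} {n : Fin m → ℤ}
    (hα : ∀ j, α j ^ d = n j) (hS : ∑ j, (e j : ℂ) * α j ≠ 0) :
    1 ≤ ∑ j, ‖(e j : ℂ) * α j‖ := by
  obtain ⟨j, -, hj⟩ := exists_ne_zero_of_sum_ne_zero hS
  have hpow : ((e j : ℂ) * α j) ^ d = ((e j ^ d * n j : ℤ) : ℂ) := by
    push_cast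
    rw [mul_pow, hα]
  exact (one_le_norm_of_pow_eq_intCast hpow hj).trans
    (single_le_sum (f := fun i ↦ ‖(e i : ℂ) * α i‖) (fun i _ ↦ norm_nonneg _) (mem_univ j))

omit [NeZero d] in
theorem norm_twistedSum_le (e : Fin m → ℤ) {ω : ℂ} (hω : ‖ω‖ = 1) (α : Fin m → ℂ)
    (c : Fin m → ZMod d) : ‖twistedSum e ω α c‖ ≤ ∑ j, ‖(e j : ℂ) * α j‖ :=
  (norm_sum_le _ _).trans (sum_le_sum fun j _ ↦ by simp [hω])

theorem norm_twistedProd_le (e : Fin m → ℤ) {ω : ℂ} (hω : IsPrimitiveRoot ω d)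
    (α : Fin m → ℂ) (hS : ∑ j, (e j : ℂ) * α j ≠ 0) (hB : 1 ≤ ∑ j, ‖(e j : ℂ) * α j‖) :
    ‖twistedProd d e ω α‖ ≤
      (‖∑ j, (e j : ℂ) * α j‖ * (∑ j, ‖(e j : ℂ) * α j‖) ^ (d ^ (m - 1) - 1)) ^ d := by
  have hω1 : ‖ω‖ = 1 := hω.norm'_eq_one (NeZero.ne d)
  have hm : 0 < m := Nat.pos_of_ne_zero <| by rintro rfl; exact hS (by simp)
  have : Nonempty (Fin m) := Fin.pos_iff_nonempty.mp hm
  have hexp : (d ^ (m - 1) - 1) * d = d ^ m - d := by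
    rw [Nat.sub_one_mul, ← pow_succ, Nat.sub_add_cancel hm]
  let consts := (univ : Finset (ZMod d)).map ⟨Function.const (Fin m), Function.const_injective⟩
  rw [mul_pow, ← pow_mul, hexp, twistedProd, norm_prod, ← prod_mul_prod_compl consts]
  gcongr
  · rw [prod_map]
    refine le_of_eq ?_
    calc ∏ a : ZMod d, ‖if twistedSum e ω α (Function.const _ a) = 0 then 1
          else twistedSum e ω α (Function.const _ a)‖
        = ∏ _a : ZMod d, ‖∑ j, (e j : ℂ) * α j‖ := prod_congr rfl fun a _ ↦ by
          rw [twistedSum_const,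
            if_neg (mul_ne_zero (pow_ne_zero _ (hω.ne_zero (NeZero.ne d))) hS), norm_mul,
            norm_pow, hω1, one_pow, one_mul]
      _ = ‖∑ j, (e j : ℂ) * α j‖ ^ d := by rw [prod_const, card_univ, ZMod.card]
  · calc ∏ c ∈ constsᶜ, ‖if twistedSum e ω α c = 0 then 1 else twistedSum e ω α c‖
        ≤ ∏ _c ∈ constsᶜ, ∑ j, ‖(e j : ℂ) * α j‖ :=
          prod_le_prod (fun _ _ ↦ norm_nonneg _) fun c _ ↦ by
            split_ifs
            exacts [norm_one.trans_le hB, norm_twistedSum_le e hω1 α c]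
      _ = (∑ j, ‖(e j : ℂ) * α j‖) ^ (d ^ m - d) := by
          rw [prod_const, card_compl, card_map, card_univ, ZMod.card]
          simp

theorem one_le_norm_sum_mul_pow (e : Fin m → ℤ) {α : Fin m → ℂ} {n : Fin m → ℤ}
    (hα : ∀ j, α j ^ d = n j) (hS : ∑ j, (e j : ℂ) * α j ≠ 0) :
    1 ≤ ‖∑ j, (e j : ℂ) * α j‖ * (∑ j, ‖(e j : ℂ) * α j‖) ^ (d ^ (m - 1) - 1) := by
  have hω := Complex.isPrimitiveRoot_exp d (NeZero.ne d)
  have hpow := (one_le_norm_twistedProd e hω hα).trans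
    (norm_twistedProd_le e hω α hS (one_le_sum_norm_mul e hα hS))
  exact (one_le_pow_iff_of_nonneg (by positivity) (NeZero.ne d)).mp hpow

end Estimates

theorem stmt4_general (m : ℕ) (M : ℝ) (n : Fin m → ℕ) (ε : Fin m → ℝ)
    (hn : ∀ j, 0 < n j ∧ (n j : ℝ) ≤ M)
    (hε : ∀ j, ε j = 1 ∨ ε j = -1)
    (hS : ∑ j, ε j * (n j : ℝ) ^ ((1 : ℝ) / 3) ≠ 0) :
    |∑ j, ε j * (n j : ℝ) ^ ((1 : ℝ) / 3)| ≥
      1 / ((m : ℝ) * M ^ ((1 : ℝ) / 3)) ^ (3 ^ (m - 1) - 1 : ℕ) := by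
  have hεint (j : Fin m) : ∃ z : ℤ, (z : ℝ) = ε j := by
    rcases hε j with h | h
    exacts [⟨1, by simp [h]⟩, ⟨-1, by simp [h]⟩]
  choose e he using hεint
  set α : Fin m → ℝ := fun j ↦ (n j : ℝ) ^ ((1 : ℝ) / 3)
  have hα (j : Fin m) : (α j : ℂ) ^ 3 = ((n j : ℤ) : ℂ) := by
    rw [← Complex.ofReal_pow, ← Real.rpow_natCast, ← Real.rpow_mul (Nat.cast_nonneg _)]
    norm_num
  have hsum : ∑ j, (e j : ℂ) * α j = ((∑ j, ε j * α j : ℝ) : ℂ) := by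
    push_cast [← he]
    rfl
  have hS' : ∑ j, (e j : ℂ) * α j ≠ 0 := by rw [hsum]; exact_mod_cast hS
  have hB := one_le_sum_norm_mul e hα hS'
  have key := one_le_norm_sum_mul_pow e hα hS'
  have hle : ∑ j, ‖(e j : ℂ) * α j‖ ≤ m * M ^ ((1 : ℝ) / 3) := by
    refine (sum_le_card_nsmul univ _ (M ^ ((1 : ℝ) / 3)) fun j _ ↦ ?_).trans_eq (by simp)
    have hεj : |ε j| = 1 := by rcases hε j with h | h <;> simp [h]
    rw [norm_mul, Complex.norm_intCast, he, hεj, one_mul, Complex.norm_real,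
      Real.norm_of_nonneg (by positivity)]
    exact Real.rpow_le_rpow (Nat.cast_nonneg _) (hn j).2 (by norm_num)
  rw [hsum, Complex.norm_real, Real.norm_eq_abs] at key
  rw [ge_iff_le, div_le_iff₀ (pow_pos (zero_lt_one.trans_le (hB.trans hle)) _)]
  exact key.trans (by gcongr)

/-- Liouville-type lower bound for nonvanishing signed sums of cube roots:
if `n_1, …, n_m ≤ M` are positive integers and `ε_j = ±1` with
`S = Σ ε_j n_j^{1/3} ≠ 0`, then `|S| ≥ (m M^{1/3})^{-(3^{m-1} - 1)}`. -/
theorem stmt4 (m : ℕ) (hm : 1 ≤ m) (M : ℝ) (n : Fin m → ℕ) (ε : Fin m → ℝ)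
    (hn : ∀ j, 0 < n j ∧ (n j : ℝ) ≤ M)
    (hε : ∀ j, ε j = 1 ∨ ε j = -1)
    (hS : ∑ j, ε j * (n j : ℝ) ^ ((1 : ℝ) / 3) ≠ 0) :
    |∑ j, ε j * (n j : ℝ) ^ ((1 : ℝ) / 3)| ≥
      1 / ((m : ℝ) * M ^ ((1 : ℝ) / 3)) ^ (3 ^ (m - 1) - 1 : ℕ) :=
  stmt4_general m M n ε hn hε hS
end

section
/- Let (c_n)_{n≥1} be real numbers with Σ_n c_n^2 < ∞, let (X_n) be independent uniform [0,1] random variables, and set Z = Σ_n c_n cos(2π X_n) (converging in L^2). Then for every positive integer k, E[|Z|^{2k}] ≤ k! · (Σ_n c_n^2)^k. -/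
/-!
Let `g m = (2m)! / (2^m m!)` (`gaussMoment`), the `2m`-th moment of a standard Gaussian. Say `W`
is dominated by `N(0, v)` if its odd moments vanish and `E[W^{2m}] ≤ g m * v^m`. This is stable
under independent sums: expanding `E[(S + W)^{2m}]` binomially, independence factors each term,
the odd terms vanish, and `Σ_j C(2m,2j) g_j g_{m-j} a^j b^{m-j} = g_m (a + b)^m`. (The cruder
bound `k!` does not survive this induction, since `C(4,2) > C(2,1)^2`.)

Each `c_n cos(2π X_n)` is dominated by `N(0, c_n²/2)`, because `E[cos^{2m}] ≤ E[cos²] = 1/2`.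
Hence `E[S_N^{2k}] ≤ gaussMoment k (Σ c_n²/2)^k ≤ k! (Σ c_n²)^k` for the partial sums, and
Fatou's lemma along an a.e. convergent subsequence carries the bound to the `L²` limit `Z`.
-/

open Real MeasureTheory ProbabilityTheory Filter Finset

noncomputable def gaussMoment (m : ℕ) : ℝ := (2 * m).factorial / (2 ^ m * m.factorial)

lemma gaussMoment_zero : gaussMoment 0 = 1 := by simp [gaussMoment]

lemma gaussMoment_succ (m : ℕ) : gaussMoment (m + 1) = (2 * m + 1) * gaussMoment m := by
  rw [gaussMoment, gaussMoment, show 2 * (m + 1) = 2 * m + 1 + 1 by ring,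
    Nat.factorial_succ, Nat.factorial_succ, Nat.factorial_succ]
  push_cast
  field_simp
  ring

lemma gaussMoment_le (m : ℕ) : gaussMoment m ≤ 2 ^ m * m.factorial := by
  have hfac : ((2 * m).factorial : ℝ) = m.centralBinom * m.factorial * m.factorial := by
    rw [Nat.centralBinom_eq_two_mul_choose, two_mul]
    exact_mod_cast (Nat.add_choose_mul_factorial_mul_factorial m m).symm
  have hcb : (m.centralBinom : ℝ) ≤ 4 ^ m := by exact_mod_cast Nat.centralBinom_le_four_pow m
  rw [gaussMoment, div_le_iff₀ (by positivity), hfac]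
  calc (m.centralBinom : ℝ) * m.factorial * m.factorial
      ≤ 4 ^ m * m.factorial * m.factorial := by gcongr
    _ = 2 ^ m * m.factorial * (2 ^ m * m.factorial) := by
      rw [show (4 : ℝ) = 2 * 2 by norm_num, mul_pow]; ring

lemma gaussMoment_mul_half_pow_le {σ : ℝ} (hσ : 0 ≤ σ) (k : ℕ) :
    gaussMoment k * (σ / 2) ^ k ≤ k.factorial * σ ^ k := by
  calc gaussMoment k * (σ / 2) ^ k ≤ 2 ^ k * k.factorial * (σ / 2) ^ k := by
        gcongr; exact gaussMoment_le k
    _ = k.factorial * σ ^ k := by rw [div_pow]; field_simp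

lemma two_pow_le_gaussMoment_succ (m : ℕ) : (2 : ℝ) ^ m ≤ gaussMoment (m + 1) := by
  induction m with
  | zero => simp [gaussMoment_succ, gaussMoment_zero]
  | succ m ih =>
    rw [gaussMoment_succ, pow_succ]
    push_cast
    nlinarith [pow_pos (two_pos : (0 : ℝ) < 2) m, m.cast_nonneg (α := ℝ)]

lemma choose_mul_gaussMoment_mul_gaussMoment {m j : ℕ} (hj : j ≤ m) :
    ((2 * m).choose (2 * j) : ℝ) * gaussMoment j * gaussMoment (m - j) =
      gaussMoment m * m.choose j := by
  rw [Nat.cast_choose ℝ (by omega : 2 * j ≤ 2 * m), Nat.cast_choose ℝ hj, gaussMoment,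
    gaussMoment, gaussMoment, show 2 * m - 2 * j = 2 * (m - j) by omega]
  have hpow : (2 : ℝ) ^ j * 2 ^ (m - j) = 2 ^ m := by rw [← pow_add, Nat.add_sub_cancel' hj]
  field_simp
  rw [← hpow]

lemma sum_choose_mul_le_gaussMoment {s w : ℕ → ℝ} {a b : ℝ} (hs₀ : ∀ j, 0 ≤ s j)
    (hw₀ : ∀ j, 0 ≤ w j) (hs : ∀ j, s j ≤ gaussMoment j * a ^ j)
    (hw : ∀ j, w j ≤ gaussMoment j * b ^ j) (m : ℕ) :
    ∑ j ∈ range (m + 1), ((2 * m).choose (2 * j) : ℝ) * (s j * w (m - j)) ≤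
      gaussMoment m * (a + b) ^ m := by
  calc ∑ j ∈ range (m + 1), ((2 * m).choose (2 * j) : ℝ) * (s j * w (m - j))
      ≤ ∑ j ∈ range (m + 1), ((2 * m).choose (2 * j) : ℝ) *
          ((gaussMoment j * a ^ j) * (gaussMoment (m - j) * b ^ (m - j))) := by
        refine sum_le_sum fun j _ => mul_le_mul_of_nonneg_left ?_ (Nat.cast_nonneg _)
        exact mul_le_mul (hs j) (hw (m - j)) (hw₀ _) ((hs₀ j).trans (hs j))
    _ = gaussMoment m * (a + b) ^ m := by
        rw [add_pow, mul_sum]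
        refine sum_congr rfl fun j hj => ?_
        have hjm : j ≤ m := by simpa [Nat.lt_succ_iff] using hj
        linear_combination (a ^ j * b ^ (m - j)) * choose_mul_gaussMoment_mul_gaussMoment hjm

lemma sum_range_two_mul_add_one_of_odd_eq_zero {M : Type*} [AddCommMonoid M] {f : ℕ → M}
    (hf : ∀ i, Odd i → f i = 0) (m : ℕ) :
    ∑ i ∈ range (2 * m + 1), f i = ∑ j ∈ range (m + 1), f (2 * j) := by
  induction m with
  | zero => simp
  | succ m ih =>
    rw [show 2 * (m + 1) + 1 = 2 * m + 1 + 1 + 1 by ring, sum_range_succ, sum_range_succ, ih,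
      hf _ (odd_two_mul_add_one m), add_zero, sum_range_succ (n := m + 1)]
    rfl

lemma integral_cos_two_pi_pow_of_odd {m : ℕ} (hm : Odd m) :
    ∫ x in (0 : ℝ)..1, cos (2 * π * x) ^ m = 0 := by
  have hper : Function.Periodic (fun x => cos (2 * π * x) ^ m) 1 := fun x => by
    simp [mul_add, cos_add_two_pi]
  have hneg : ∫ x in (0 : ℝ)..1, cos (2 * π * x) ^ m =
      -∫ x in (0 : ℝ)..1, cos (2 * π * x) ^ m := by
    calc ∫ x in (0 : ℝ)..1, cos (2 * π * x) ^ m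
        = ∫ x in (1 / 2 : ℝ)..1 / 2 + 1, cos (2 * π * x) ^ m := by
          simpa using hper.intervalIntegral_add_eq 0 (1 / 2)
      _ = ∫ x in (0 : ℝ)..1, cos (2 * π * (x + 1 / 2)) ^ m := by
          rw [intervalIntegral.integral_comp_add_right (fun x => cos (2 * π * x) ^ m)]; norm_num
      _ = -∫ x in (0 : ℝ)..1, cos (2 * π * x) ^ m := by
          rw [← intervalIntegral.integral_neg]
          congr 1; ext x
          rw [show 2 * π * (x + 1 / 2) = 2 * π * x + π by ring, cos_add_pi, hm.neg_pow]
  linarith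

lemma integral_cos_two_pi_sq : ∫ x in (0 : ℝ)..1, cos (2 * π * x) ^ 2 = 1 / 2 := by
  have h := intervalIntegral.integral_comp_mul_left (fun u => cos u ^ 2) (two_pi_pos.ne')
    (a := 0) (b := 1)
  simp only [mul_zero, mul_one] at h
  rw [h, integral_cos_sq, sin_two_pi, cos_two_pi]
  simp
  field_simp

lemma integral_cos_two_pi_pow_two_mul_le (j : ℕ) :
    ∫ x in (0 : ℝ)..1, cos (2 * π * x) ^ (2 * j) ≤ gaussMoment j * (1 / 2) ^ j := by
  rcases j with _ | j
  · simp [gaussMoment_zero]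
  have hle : ∫ x in (0 : ℝ)..1, cos (2 * π * x) ^ (2 * (j + 1)) ≤
      ∫ x in (0 : ℝ)..1, cos (2 * π * x) ^ 2 := by
    refine intervalIntegral.integral_mono_on zero_le_one
      (Continuous.intervalIntegrable (by fun_prop) _ _)
      (Continuous.intervalIntegrable (by fun_prop) _ _) fun x _ => ?_
    rw [pow_mul]
    exact pow_le_of_le_one (sq_nonneg _) (sq_le_one_iff_abs_le_one _ |>.mpr (abs_cos_le_one _))
      (by omega)
  have hhalf : (1 / 2 : ℝ) ≤ gaussMoment (j + 1) * (1 / 2) ^ (j + 1) := by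
    have := two_pow_le_gaussMoment_succ j
    rw [div_pow, one_pow, pow_succ]
    field_simp
    linarith
  rw [integral_cos_two_pi_sq] at hle
  linarith

section CosineOfUniform

variable {Ω : Type*} [MeasurableSpace Ω] {μ : Measure Ω} {U : Ω → ℝ}

lemma integrable_mul_cos_pow [IsFiniteMeasure μ] (hU : AEMeasurable U μ) (c : ℝ) (p : ℕ) :
    Integrable (fun ω => (c * cos (2 * π * U ω)) ^ p) μ :=
  .of_bound (by fun_prop) (|c| ^ p) (ae_of_all _ fun ω => by
    rw [norm_pow, Real.norm_eq_abs, abs_mul]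
    exact pow_le_pow_left₀ (by positivity)
      (mul_le_of_le_one_right (abs_nonneg _) (abs_cos_le_one _)) p)

lemma integral_mul_cos_pow_of_map_eq (hU : AEMeasurable U μ)
    (hmap : μ.map U = volume.restrict (Set.Icc 0 1)) (c : ℝ) (p : ℕ) :
    ∫ ω, (c * cos (2 * π * U ω)) ^ p ∂μ = c ^ p * ∫ x in (0 : ℝ)..1, cos (2 * π * x) ^ p := by
  have hg : AEStronglyMeasurable (fun x : ℝ => cos (2 * π * x) ^ p) (μ.map U) := by
    fun_prop
  simp_rw [mul_pow, integral_const_mul]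
  rw [← integral_map hU hg, hmap, integral_Icc_eq_integral_Ioc,
    ← intervalIntegral.integral_of_le zero_le_one]

lemma integral_mul_cos_pow_of_odd (hU : AEMeasurable U μ)
    (hmap : μ.map U = volume.restrict (Set.Icc 0 1)) (c : ℝ) {p : ℕ} (hp : Odd p) :
    ∫ ω, (c * cos (2 * π * U ω)) ^ p ∂μ = 0 := by
  rw [integral_mul_cos_pow_of_map_eq hU hmap, integral_cos_two_pi_pow_of_odd hp, mul_zero]

lemma integral_mul_cos_pow_two_mul_le (hU : AEMeasurable U μ)
    (hmap : μ.map U = volume.restrict (Set.Icc 0 1)) (c : ℝ) (m : ℕ) :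
    ∫ ω, (c * cos (2 * π * U ω)) ^ (2 * m) ∂μ ≤ gaussMoment m * (c ^ 2 / 2) ^ m := by
  calc ∫ ω, (c * cos (2 * π * U ω)) ^ (2 * m) ∂μ
      = (c ^ 2) ^ m * ∫ x in (0 : ℝ)..1, cos (2 * π * x) ^ (2 * m) := by
        rw [integral_mul_cos_pow_of_map_eq hU hmap, pow_mul]
    _ ≤ (c ^ 2) ^ m * (gaussMoment m * (1 / 2) ^ m) := by
        gcongr; exact integral_cos_two_pi_pow_two_mul_le m
    _ = gaussMoment m * (c ^ 2 / 2) ^ m := by rw [div_eq_mul_one_div _ 2, mul_pow]; ring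

end CosineOfUniform

section Moments

variable {Ω : Type*} [MeasurableSpace Ω] {μ : Measure Ω} {S W : Ω → ℝ}

lemma ProbabilityTheory.IndepFun.integrable_pow_mul_pow (hSW : IndepFun S W μ)
    (hS : ∀ i, Integrable (fun ω => S ω ^ i) μ) (hW : ∀ j, Integrable (fun ω => W ω ^ j) μ)
    (i j : ℕ) : Integrable (fun ω => S ω ^ i * W ω ^ j) μ :=
  (hSW.comp (measurable_id.pow_const i) (measurable_id.pow_const j)).integrable_mul (hS i) (hW j)

lemma ProbabilityTheory.IndepFun.integrable_add_pow (hSW : IndepFun S W μ)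
    (hS : ∀ i, Integrable (fun ω => S ω ^ i) μ) (hW : ∀ j, Integrable (fun ω => W ω ^ j) μ)
    (n : ℕ) : Integrable (fun ω => (S ω + W ω) ^ n) μ := by
  simp_rw [add_pow]
  exact integrable_finsetSum _ fun i _ => (hSW.integrable_pow_mul_pow hS hW i (n - i)).mul_const _

lemma ProbabilityTheory.IndepFun.integral_add_pow (hSW : IndepFun S W μ) (hSm : AEMeasurable S μ)
    (hWm : AEMeasurable W μ) (hS : ∀ i, Integrable (fun ω => S ω ^ i) μ)
    (hW : ∀ j, Integrable (fun ω => W ω ^ j) μ) (n : ℕ) :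
    ∫ ω, (S ω + W ω) ^ n ∂μ =
      ∑ i ∈ range (n + 1), (∫ ω, S ω ^ i ∂μ) * (∫ ω, W ω ^ (n - i) ∂μ) * (n.choose i : ℝ) := by
  simp_rw [add_pow]
  rw [integral_finsetSum _ fun i _ => (hSW.integrable_pow_mul_pow hS hW i (n - i)).mul_const _]
  refine sum_congr rfl fun i _ => ?_
  rw [integral_mul_const, hSW.integral_fun_comp_mul_comp (f := (· ^ i)) (g := (· ^ (n - i)))
    hSm hWm (by fun_prop) (by fun_prop)]

lemma ProbabilityTheory.IndepFun.integral_add_pow_two_mul (hSW : IndepFun S W μ)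
    (hSm : AEMeasurable S μ) (hWm : AEMeasurable W μ) (hS : ∀ i, Integrable (fun ω => S ω ^ i) μ)
    (hW : ∀ j, Integrable (fun ω => W ω ^ j) μ) (hW_odd : ∀ j, Odd j → ∫ ω, W ω ^ j ∂μ = 0)
    (m : ℕ) :
    ∫ ω, (S ω + W ω) ^ (2 * m) ∂μ = ∑ j ∈ range (m + 1),
      ((2 * m).choose (2 * j) : ℝ) * ((∫ ω, S ω ^ (2 * j) ∂μ) * ∫ ω, W ω ^ (2 * (m - j)) ∂μ) := by
  rw [hSW.integral_add_pow hSm hWm hS hW, sum_range_two_mul_add_one_of_odd_eq_zero]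
  · refine sum_congr rfl fun j _ => ?_
    rw [show 2 * m - 2 * j = 2 * (m - j) by omega]
    ring
  · intro i hi
    rcases le_or_gt i (2 * m) with him | him
    · rw [hW_odd _ (Nat.Even.sub_odd him (even_two_mul m) hi), mul_zero, zero_mul]
    · rw [Nat.choose_eq_zero_of_lt him, Nat.cast_zero, mul_zero]

end Moments

section PartialSums

variable {Ω : Type*} [MeasurableSpace Ω] {μ : Measure Ω} {W : ℕ → Ω → ℝ}

lemma ProbabilityTheory.iIndepFun.integrable_pow_sum_range [IsFiniteMeasure μ]
    (hW : iIndepFun W μ) (hWm : ∀ n, AEMeasurable (W n) μ)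
    (hWi : ∀ n p, Integrable (fun ω => W n ω ^ p) μ) (N p : ℕ) :
    Integrable (fun ω => (∑ n ∈ range N, W n ω) ^ p) μ := by
  induction N generalizing p with
  | zero => simp
  | succ N ih =>
    simp_rw [sum_range_succ]
    simpa using (hW.indepFun_sum_range_succ₀ hWm N).integrable_add_pow (by simpa using ih) (hWi N) p

lemma ProbabilityTheory.iIndepFun.integral_pow_sum_range_le [IsProbabilityMeasure μ]
    (hW : iIndepFun W μ) (hWm : ∀ n, AEMeasurable (W n) μ)
    (hWi : ∀ n p, Integrable (fun ω => W n ω ^ p) μ)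
    (hW_odd : ∀ n p, Odd p → ∫ ω, W n ω ^ p ∂μ = 0) {v : ℕ → ℝ}
    (hW_even : ∀ n m, ∫ ω, W n ω ^ (2 * m) ∂μ ≤ gaussMoment m * v n ^ m) (N m : ℕ) :
    ∫ ω, (∑ n ∈ range N, W n ω) ^ (2 * m) ∂μ ≤ gaussMoment m * (∑ n ∈ range N, v n) ^ m := by
  induction N generalizing m with
  | zero => rcases m with _ | m <;> simp [gaussMoment_zero]
  | succ N ih =>
    have hsum := (hW.indepFun_sum_range_succ₀ hWm N).integral_add_pow_two_mul
      (Finset.aemeasurable_sum _ fun n _ => hWm n) (hWm N)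
      (by simpa using hW.integrable_pow_sum_range hWm hWi N) (hWi N) (hW_odd N) m
    simp only [Finset.sum_apply] at hsum
    simp_rw [sum_range_succ, hsum]
    have h_even_nonneg : ∀ (f : Ω → ℝ) j, 0 ≤ ∫ ω, f ω ^ (2 * j) ∂μ := fun f j =>
      integral_nonneg fun ω => (even_two_mul j).pow_nonneg _
    exact sum_choose_mul_le_gaussMoment (h_even_nonneg _) (h_even_nonneg _) ih (hW_even N) m

end PartialSums

section Fatou

variable {Ω : Type*} [MeasurableSpace Ω] {μ : Measure Ω}

lemma integral_le_of_tendsto_ae {F : ℕ → Ω → ℝ} {G : Ω → ℝ} {B : ℝ}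
    (hF₀ : ∀ n, 0 ≤ᵐ[μ] F n) (hFi : ∀ n, Integrable (F n) μ)
    (hFG : ∀ᵐ ω ∂μ, Tendsto (fun n => F n ω) atTop (nhds (G ω)))
    (hB : ∀ n, ∫ ω, F n ω ∂μ ≤ B) :
    ∫ ω, G ω ∂μ ≤ B := by
  have hG₀ : 0 ≤ᵐ[μ] G := by
    filter_upwards [hFG, ae_all_iff.2 hF₀] with ω hω h₀ using ge_of_tendsto' hω h₀
  have hGm : AEStronglyMeasurable G μ :=
    aestronglyMeasurable_of_tendsto_ae atTop (fun n => (hFi n).aestronglyMeasurable) hFG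
  have hB₀ : 0 ≤ B := (integral_nonneg_of_ae (hF₀ 0)).trans (hB 0)
  rw [integral_eq_lintegral_of_nonneg_ae hG₀ hGm]
  refine ENNReal.toReal_le_of_le_ofReal hB₀ ?_
  calc ∫⁻ ω, ENNReal.ofReal (G ω) ∂μ
      = ∫⁻ ω, liminf (fun n => ENNReal.ofReal (F n ω)) atTop ∂μ := by
        refine lintegral_congr_ae ?_
        filter_upwards [hFG] with ω hω
        exact ((ENNReal.continuous_ofReal.tendsto _).comp hω).liminf_eq.symm
    _ ≤ liminf (fun n => ∫⁻ ω, ENNReal.ofReal (F n ω) ∂μ) atTop :=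
        lintegral_liminf_le' fun n => (hFi n).aemeasurable.ennreal_ofReal
    _ ≤ ENNReal.ofReal B := by
        refine liminf_le_of_frequently_le' (Frequently.of_forall fun n => ?_)
        rw [← ofReal_integral_eq_lintegral_ofReal (hFi n) (hF₀ n)]
        exact ENNReal.ofReal_le_ofReal (hB n)

lemma integral_abs_pow_le_of_tendsto_eLpNorm {f : ℕ → Ω → ℝ} {g : Ω → ℝ} {p : ENNReal}
    (hp : p ≠ 0) (hf : ∀ n, AEStronglyMeasurable (f n) μ) (hg : AEStronglyMeasurable g μ)
    (hfg : Tendsto (fun n => eLpNorm (f n - g) p μ) atTop (nhds 0)) {q : ℕ} {B : ℝ}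
    (hfi : ∀ n, Integrable (fun ω => |f n ω| ^ q) μ) (hB : ∀ n, ∫ ω, |f n ω| ^ q ∂μ ≤ B) :
    ∫ ω, |g ω| ^ q ∂μ ≤ B := by
  obtain ⟨ns, -, hns⟩ := (tendstoInMeasure_of_tendsto_eLpNorm hp hf hg hfg).exists_seq_tendsto_ae
  refine integral_le_of_tendsto_ae (fun i => ae_of_all _ fun ω => by positivity)
    (fun i => hfi (ns i)) ?_ (fun i => hB (ns i))
  filter_upwards [hns] with ω hω using hω.abs.pow q

end Fatou

theorem stmt7_general {Ω : Type*} [MeasureSpace Ω] (μ : Measure Ω) [IsProbabilityMeasure μ]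
    (X : ℕ → Ω → ℝ)
    (hmeas : ∀ n, Measurable (X n))
    (hindep : iIndepFun X μ)
    (hunif : ∀ n, Measure.map (X n) μ = volume.restrict (Set.Icc (0 : ℝ) 1))
    (c : ℕ → ℝ) (hc : Summable (fun n => c n ^ 2))
    (Z : Ω → ℝ) (hZmeas : Measurable Z)
    (hZ : Tendsto (fun N => eLpNorm
        (fun ω => (∑ n ∈ Finset.range N, c n * Real.cos (2 * Real.pi * X n ω)) - Z ω) 2 μ)
      atTop (nhds 0))
    (k : ℕ) :
    (∫ ω, |Z ω| ^ (2 * k) ∂μ) ≤ (k.factorial : ℝ) * (∑' n, c n ^ 2) ^ k := by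
  set W : ℕ → Ω → ℝ := fun n ω => c n * cos (2 * π * X n ω)
  have hX := fun n => (hmeas n).aemeasurable (μ := μ)
  have hWindep : iIndepFun W μ :=
    hindep.comp (fun n x => c n * cos (2 * π * x)) fun n => by fun_prop
  have hWi (n p : ℕ) : Integrable (fun ω => W n ω ^ p) μ := integrable_mul_cos_pow (hX n) (c n) p
  have hpartial (N : ℕ) :
      ∫ ω, |∑ n ∈ range N, W n ω| ^ (2 * k) ∂μ ≤ k.factorial * (∑' n, c n ^ 2) ^ k := by
    simp_rw [(even_two_mul k).pow_abs]
    calc ∫ ω, (∑ n ∈ range N, W n ω) ^ (2 * k) ∂μ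
        ≤ gaussMoment k * ((∑ n ∈ range N, c n ^ 2) / 2) ^ k := by
          rw [sum_div]
          exact hWindep.integral_pow_sum_range_le (fun n => by fun_prop) hWi
            (fun n p => integral_mul_cos_pow_of_odd (hX n) (hunif n) (c n))
            (fun n => integral_mul_cos_pow_two_mul_le (hX n) (hunif n) (c n)) N k
      _ ≤ k.factorial * (∑ n ∈ range N, c n ^ 2) ^ k :=
          gaussMoment_mul_half_pow_le (sum_nonneg fun n _ => sq_nonneg _) k
      _ ≤ k.factorial * (∑' n, c n ^ 2) ^ k := by
          gcongr
          exact hc.sum_le_tsum _ fun n _ => sq_nonneg _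
  refine integral_abs_pow_le_of_tendsto_eLpNorm two_ne_zero
    (f := fun N ω => ∑ n ∈ range N, W n ω) (fun N => by fun_prop) hZmeas.aestronglyMeasurable
    hZ (fun N => ?_) hpartial
  simpa only [(even_two_mul k).pow_abs] using
    hWindep.integrable_pow_sum_range (fun n => by fun_prop) hWi N (2 * k)

/-- Moment bound for random cosine series: if `Z = Σ_n c_n cos(2π X_n)` (as an `L²` limit)
with `Σ c_n² < ∞` and the `X_n` independent uniform on `[0,1]`, then
`E[|Z|^{2k}] ≤ k! (Σ c_n²)^k`. -/
theorem stmt7 {Ω : Type*} [MeasureSpace Ω] (μ : Measure Ω) [IsProbabilityMeasure μ]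
    (X : ℕ → Ω → ℝ)
    (hmeas : ∀ n, Measurable (X n))
    (hindep : iIndepFun X μ)
    (hunif : ∀ n, Measure.map (X n) μ = volume.restrict (Set.Icc (0 : ℝ) 1))
    (c : ℕ → ℝ) (hc : Summable (fun n => c n ^ 2))
    (Z : Ω → ℝ) (hZmeas : Measurable Z)
    (hZ : Tendsto (fun N => eLpNorm
        (fun ω => (∑ n ∈ Finset.range N, c n * Real.cos (2 * Real.pi * X n ω)) - Z ω) 2 μ)
      atTop (nhds 0))
    (k : ℕ) (hk : 0 < k) :
    (∫ ω, |Z ω| ^ (2 * k) ∂μ) ≤ (k.factorial : ℝ) * (∑' n, c n ^ 2) ^ k :=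
  stmt7_general μ X hmeas hindep hunif c hc Z hZmeas hZ k
end
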